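/- arXiv:2103.09017 — 7 statements merged into one kernel-verified Lean document; each statement's English description precedes it below -/
import Mathlib

section
/- Let g : ℝⁿ → ℝ be a convex continuous function and λ > 0. Then the Moreau–Yosida envelope g^λ is differentiable at every x ∈ ℝⁿ with gradient ∇g^λ(x) = (x − prox_g^λ(x))/λ, where prox_g^λ(x) is the unique minimizer of u ↦ g(u) + ‖x − u‖²/(2λ). -/
open Set

/-- The Moreau–Yosida envelope of `g` with parameter `lam`. -/
noncomputable def mye {n : ℕ} (g : EuclideanSpace ℝ (Fin n) → ℝ) (lam : ℝ)
    (x : EuclideanSpace ℝ (Fin n)) : ℝ :=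
  ⨅ z : EuclideanSpace ℝ (Fin n), (g z + ‖x - z‖ ^ 2 / (2 * lam))

local notation "⟪" x ", " y "⟫" => @inner ℝ _ _ x y

variable {n : ℕ}

private lemma half_norm_sq (u v : EuclideanSpace ℝ (Fin n)) :
    ‖(1/2 : ℝ) • (u + v)‖ ^ 2 = (‖u‖ ^ 2 + ‖v‖ ^ 2) / 2 - ‖u - v‖ ^ 2 / 4 := by
  have h1 := norm_add_sq_real u v
  have h2 := norm_sub_sq_real u v
  have h3 : ‖(1/2 : ℝ) • (u + v)‖ ^ 2 = (1/4) * ‖u + v‖ ^ 2 := by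
    rw [norm_smul]; rw [Real.norm_eq_abs]; rw [mul_pow]; norm_num
  rw [h3, h1, h2]; ring

/-- existence of a minimizer -/
private lemma exists_min (g : EuclideanSpace ℝ (Fin n) → ℝ) (lam : ℝ)
    (hconv : ConvexOn ℝ Set.univ g) (hcont : Continuous g) (hlam : 0 < lam)
    (x : EuclideanSpace ℝ (Fin n)) :
    ∃ p, IsMinOn (fun u => g u + ‖x - u‖ ^ 2 / (2 * lam)) Set.univ p := by
  set f : EuclideanSpace ℝ (Fin n) → ℝ := fun u => g u + ‖x - u‖ ^ 2 / (2 * lam) with hf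
  obtain ⟨w, hw, hwmin⟩ := (isCompact_closedBall x 1).exists_isMinOn
    ⟨x, Metric.mem_closedBall_self zero_le_one⟩ hcont.continuousOn
  set C : ℝ := g x - g w with hC
  have hC0 : 0 ≤ C := sub_nonneg.2 (hwmin (Metric.mem_closedBall_self zero_le_one))
  set R : ℝ := max 1 (2 * lam * C + 1) with hR
  have hR1 : 1 ≤ R := le_max_left _ _
  have hRC : 2 * lam * C < R := lt_of_lt_of_le (by linarith) (le_max_right _ _)
  have hfc : Continuous f := by
    apply hcont.add
    exact ((continuous_const.sub continuous_id).norm.pow 2).div_const _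
  obtain ⟨p, hp, hpmin⟩ := (isCompact_closedBall x R).exists_isMinOn
    ⟨x, Metric.mem_closedBall_self (by linarith)⟩ hfc.continuousOn
  refine ⟨p, isMinOn_univ_iff.2 fun u => ?_⟩
  by_cases hu : u ∈ Metric.closedBall x R
  · exact hpmin hu
  · have hx : x ∈ Metric.closedBall x R := Metric.mem_closedBall_self (by linarith)
    have hfp : f p ≤ f x := hpmin hx
    set t : ℝ := ‖u - x‖ with ht
    have htR : R < t := by
      simpa [ht, Metric.mem_closedBall, dist_eq_norm, not_le, norm_sub_rev] using hu
    have ht1 : 1 ≤ t := le_trans hR1 htR.le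
    have ht0 : 0 < t := lt_of_lt_of_le one_pos ht1
    have hinv0 : (0:ℝ) ≤ 1/t := by positivity
    have hinv1 : 1/t ≤ 1 := by rw [div_le_one ht0]; exact ht1
    have hgu : g x - t * C ≤ g u := by
      have hmem : (1 - 1/t) • x + (1/t) • u ∈ Metric.closedBall x 1 := by
        have heq : (1 - 1/t) • x + (1/t) • u - x = (1/t) • (u - x) := by module
        rw [Metric.mem_closedBall, dist_eq_norm, heq, norm_smul, Real.norm_eq_abs,
          abs_of_nonneg hinv0, ← ht]
        rw [div_mul_eq_mul_div, one_mul, div_le_one ht0]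
      have hcvx : g ((1 - 1/t) • x + (1/t) • u) ≤ (1 - 1/t) * g x + (1/t) * g u := by
        have := hconv.2 (mem_univ x) (mem_univ u)
          (show (0:ℝ) ≤ 1 - 1/t by linarith) (show (0:ℝ) ≤ 1/t from hinv0)
          (show (1 - 1/t) + 1/t = 1 by ring)
        simpa [smul_eq_mul] using this
      have hgw : g w ≤ g ((1 - 1/t) • x + (1/t) • u) := hwmin hmem
      have hkey : g w ≤ (1 - 1/t) * g x + (1/t) * g u := le_trans hgw hcvx
      have h2 : t * g w ≤ (t - 1) * g x + g u := by
        have hmul := mul_le_mul_of_nonneg_left hkey ht0.le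
        have hexp : t * ((1 - 1/t) * g x + (1/t) * g u) = (t - 1) * g x + g u := by
          field_simp
        linarith [hmul, hexp.le, hexp.ge]
      rw [hC]; linarith
    have hnorm : ‖x - u‖ ^ 2 = t ^ 2 := by rw [norm_sub_rev, ← ht]
    have hfu : f x ≤ f u := by
      show g x + ‖x - x‖ ^ 2 / (2 * lam) ≤ g u + ‖x - u‖ ^ 2 / (2 * lam)
      rw [hnorm]
      have htsq : t * (2 * lam * C) ≤ t * t := by
        apply mul_le_mul_of_nonneg_left _ ht0.le
        exact le_trans hRC.le htR.le
      have : t * C ≤ t ^ 2 / (2 * lam) := by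
        rw [le_div_iff₀ (by positivity)]
        calc t * C * (2 * lam) = t * (2 * lam * C) := by ring
          _ ≤ t * t := htsq
          _ = t ^ 2 := by ring
      simp only [sub_self, norm_zero]
      have h0 : (0:ℝ) ^ 2 / (2 * lam) = 0 := by simp
      rw [h0]
      nlinarith [hgu, this]
    exact le_trans hfp hfu

private lemma mye_eq (g : EuclideanSpace ℝ (Fin n) → ℝ) (lam : ℝ)
    {x p : EuclideanSpace ℝ (Fin n)}
    (hp : IsMinOn (fun u => g u + ‖x - u‖ ^ 2 / (2 * lam)) Set.univ p) :
    mye g lam x = g p + ‖x - p‖ ^ 2 / (2 * lam) := by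
  have hbdd : BddBelow (Set.range fun z => g z + ‖x - z‖ ^ 2 / (2 * lam)) := by
    refine ⟨g p + ‖x - p‖ ^ 2 / (2 * lam), ?_⟩
    rintro y ⟨z, rfl⟩
    exact isMinOn_univ_iff.1 hp z
  exact le_antisymm (ciInf_le hbdd p) (le_ciInf fun z => isMinOn_univ_iff.1 hp z)

private lemma mye_le (g : EuclideanSpace ℝ (Fin n) → ℝ) (lam : ℝ)
    (hconv : ConvexOn ℝ Set.univ g) (hcont : Continuous g) (hlam : 0 < lam)
    (x z : EuclideanSpace ℝ (Fin n)) :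
    mye g lam x ≤ g z + ‖x - z‖ ^ 2 / (2 * lam) := by
  obtain ⟨p, hp⟩ := exists_min g lam hconv hcont hlam x
  rw [mye_eq g lam hp]
  exact isMinOn_univ_iff.1 hp z

/-- midpoint convexity of the envelope -/
private lemma mye_midpoint (g : EuclideanSpace ℝ (Fin n) → ℝ) (lam : ℝ)
    (hconv : ConvexOn ℝ Set.univ g) (hcont : Continuous g) (hlam : 0 < lam)
    (a b : EuclideanSpace ℝ (Fin n)) :
    mye g lam ((1/2 : ℝ) • (a + b)) ≤ (mye g lam a + mye g lam b) / 2 := by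
  obtain ⟨pa, hpa⟩ := exists_min g lam hconv hcont hlam a
  obtain ⟨pb, hpb⟩ := exists_min g lam hconv hcont hlam b
  have h1 : mye g lam ((1/2 : ℝ) • (a + b)) ≤
      g ((1/2 : ℝ) • (pa + pb)) + ‖(1/2 : ℝ) • (a + b) - (1/2 : ℝ) • (pa + pb)‖ ^ 2 / (2 * lam) :=
    mye_le g lam hconv hcont hlam _ _
  have hg : g ((1/2 : ℝ) • (pa + pb)) ≤ (g pa + g pb) / 2 := by
    have := hconv.2 (mem_univ pa) (mem_univ pb)
      (by norm_num : (0:ℝ) ≤ 1/2) (by norm_num : (0:ℝ) ≤ 1/2) (by norm_num)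
    calc g ((1/2 : ℝ) • (pa + pb)) = g ((1/2:ℝ) • pa + (1/2:ℝ) • pb) := by rw [smul_add]
      _ ≤ (1/2) * g pa + (1/2) * g pb := this
      _ = (g pa + g pb) / 2 := by ring
  have hnorm : ‖(1/2 : ℝ) • (a + b) - (1/2 : ℝ) • (pa + pb)‖ ^ 2 ≤
      (‖a - pa‖ ^ 2 + ‖b - pb‖ ^ 2) / 2 := by
    have heq : (1/2 : ℝ) • (a + b) - (1/2 : ℝ) • (pa + pb) = (1/2 : ℝ) • ((a - pa) + (b - pb)) := by
      module
    rw [heq, half_norm_sq]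
    have : (0:ℝ) ≤ ‖(a - pa) - (b - pb)‖ ^ 2 / 4 := by positivity
    linarith
  have ha : mye g lam a = g pa + ‖a - pa‖ ^ 2 / (2 * lam) := mye_eq g lam hpa
  have hb : mye g lam b = g pb + ‖b - pb‖ ^ 2 / (2 * lam) := mye_eq g lam hpb
  have hdiv : ‖(1/2 : ℝ) • (a + b) - (1/2 : ℝ) • (pa + pb)‖ ^ 2 / (2 * lam) ≤
      (‖a - pa‖ ^ 2 + ‖b - pb‖ ^ 2) / 2 / (2 * lam) :=
    div_le_div_of_nonneg_right hnorm (by positivity) |>.trans_eq rfl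
  rw [ha, hb]
  calc mye g lam ((1/2 : ℝ) • (a + b)) ≤ _ := h1
    _ ≤ (g pa + g pb) / 2 + (‖a - pa‖ ^ 2 + ‖b - pb‖ ^ 2) / 2 / (2 * lam) := by
        have := div_le_div_of_nonneg_right (c := 2 * lam) hnorm (by positivity)
        linarith [hg, this]
    _ = (g pa + ‖a - pa‖ ^ 2 / (2 * lam) + (g pb + ‖b - pb‖ ^ 2 / (2 * lam))) / 2 := by
        field_simp; ring


private lemma mye_upper (g : EuclideanSpace ℝ (Fin n) → ℝ) (lam : ℝ)
    (hconv : ConvexOn ℝ Set.univ g) (hcont : Continuous g) (hlam : 0 < lam)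
    {x p : EuclideanSpace ℝ (Fin n)}
    (hp : IsMinOn (fun u => g u + ‖x - u‖ ^ 2 / (2 * lam)) Set.univ p)
    (y : EuclideanSpace ℝ (Fin n)) :
    mye g lam y - mye g lam x - ⟪(1 / lam) • (x - p), y - x⟫ ≤ ‖y - x‖ ^ 2 / (2 * lam) := by
  have hmye : mye g lam x = g p + ‖x - p‖ ^ 2 / (2 * lam) := mye_eq g lam hp
  have h1 : mye g lam y ≤ g p + ‖y - p‖ ^ 2 / (2 * lam) := mye_le g lam hconv hcont hlam y p
  have h2 : ‖y - p‖ ^ 2 = ‖y - x‖ ^ 2 + 2 * ⟪y - x, x - p⟫ + ‖x - p‖ ^ 2 := by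
    have h3 : y - p = (y - x) + (x - p) := by module
    rw [h3, norm_add_sq_real]
  have hinner : ⟪(1 / lam) • (x - p), y - x⟫ = (1 / lam) * ⟪y - x, x - p⟫ := by
    rw [real_inner_smul_left, real_inner_comm]
  rw [hinner, hmye]
  rw [h2] at h1
  have hl : (1 / lam) * ⟪y - x, x - p⟫ = 2 * ⟪y - x, x - p⟫ / (2 * lam) := by
    field_simp
  have hd : (‖y - x‖ ^ 2 + 2 * ⟪y - x, x - p⟫ + ‖x - p‖ ^ 2) / (2 * lam)
      = ‖y - x‖ ^ 2 / (2 * lam) + 2 * ⟪y - x, x - p⟫ / (2 * lam) + ‖x - p‖ ^ 2 / (2 * lam) := by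
    ring
  rw [hd] at h1
  linarith [h1, hl.le, hl.ge]

theorem stmt_1 {n : ℕ} (g : EuclideanSpace ℝ (Fin n) → ℝ) (lam : ℝ)
    (hconv : ConvexOn ℝ Set.univ g) (hcont : Continuous g) (hlam : 0 < lam)
    (x : EuclideanSpace ℝ (Fin n)) :
    (∃! p : EuclideanSpace ℝ (Fin n),
      IsMinOn (fun u => g u + ‖x - u‖ ^ 2 / (2 * lam)) Set.univ p) ∧
    ∀ p : EuclideanSpace ℝ (Fin n),
      IsMinOn (fun u => g u + ‖x - u‖ ^ 2 / (2 * lam)) Set.univ p →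
        HasGradientAt (mye g lam) ((1 / lam) • (x - p)) x := by
  constructor
  · obtain ⟨p, hp⟩ := exists_min g lam hconv hcont hlam x
    refine ⟨p, hp, fun q hq => ?_⟩
    -- uniqueness via strict convexity of the quadratic term
    by_contra hne
    set f : EuclideanSpace ℝ (Fin n) → ℝ := fun u => g u + ‖x - u‖ ^ 2 / (2 * lam) with hf
    have hfq : f q ≤ f p := isMinOn_univ_iff.1 hq p
    have hfp : f p ≤ f q := isMinOn_univ_iff.1 hp q
    have heqv : f p = f q := le_antisymm hfp hfq
    have hmid : f ((1/2 : ℝ) • (q + p)) < f q := by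
      have hg : g ((1/2 : ℝ) • (q + p)) ≤ (g q + g p) / 2 := by
        have := hconv.2 (mem_univ q) (mem_univ p)
          (by norm_num : (0:ℝ) ≤ 1/2) (by norm_num : (0:ℝ) ≤ 1/2) (by norm_num)
        calc g ((1/2 : ℝ) • (q + p)) = g ((1/2:ℝ) • q + (1/2:ℝ) • p) := by rw [smul_add]
          _ ≤ (1/2) * g q + (1/2) * g p := this
          _ = (g q + g p) / 2 := by ring
      have hn : ‖x - (1/2 : ℝ) • (q + p)‖ ^ 2 =
          (‖x - q‖ ^ 2 + ‖x - p‖ ^ 2) / 2 - ‖(x - q) - (x - p)‖ ^ 2 / 4 := by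
        have heq : x - (1/2 : ℝ) • (q + p) = (1/2 : ℝ) • ((x - q) + (x - p)) := by module
        rw [heq, half_norm_sq]
      have hpos : 0 < ‖(x - q) - (x - p)‖ ^ 2 := by
        have : (x - q) - (x - p) = p - q := by module
        rw [this]
        have hne' : p - q ≠ 0 := sub_ne_zero.2 fun h => hne h.symm
        have := norm_pos_iff.mpr hne'
        positivity
      show g ((1/2 : ℝ) • (q + p)) + ‖x - (1/2 : ℝ) • (q + p)‖ ^ 2 / (2 * lam) < f q
      rw [hn]
      have hfq' : f q = g q + ‖x - q‖ ^ 2 / (2 * lam) := rfl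
      have hfp' : f p = g p + ‖x - p‖ ^ 2 / (2 * lam) := rfl
      have hrhs : (g q + g p) / 2 + (‖x - q‖ ^ 2 + ‖x - p‖ ^ 2) / 2 / (2 * lam) = f q := by
        calc (g q + g p) / 2 + (‖x - q‖ ^ 2 + ‖x - p‖ ^ 2) / 2 / (2 * lam)
            = (f q + f p) / 2 := by rw [hfq', hfp']; ring
          _ = f q := by rw [heqv]; ring
      rw [← hrhs]
      have hexp : ((‖x - q‖ ^ 2 + ‖x - p‖ ^ 2) / 2 - ‖(x - q) - (x - p)‖ ^ 2 / 4) / (2 * lam)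
          = (‖x - q‖ ^ 2 + ‖x - p‖ ^ 2) / 2 / (2 * lam)
            - ‖(x - q) - (x - p)‖ ^ 2 / (8 * lam) := by
        field_simp; ring
      have hBpos : 0 < ‖(x - q) - (x - p)‖ ^ 2 / (8 * lam) := by positivity
      linarith [hg]
    exact absurd (isMinOn_univ_iff.1 hq _) (not_le.2 hmid)
  · intro p hp
    have hmye : mye g lam x = g p + ‖x - p‖ ^ 2 / (2 * lam) := mye_eq g lam hp
    set v : EuclideanSpace ℝ (Fin n) := (1 / lam) • (x - p) with hv
    have key : ∀ y, |mye g lam y - mye g lam x - ⟪v, y - x⟫| ≤ ‖y - x‖ ^ 2 / (2 * lam) := by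
      intro y
      have hupper : mye g lam y - mye g lam x - ⟪v, y - x⟫ ≤ ‖y - x‖ ^ 2 / (2 * lam) :=
        mye_upper g lam hconv hcont hlam hp y
      have hlower : -(‖y - x‖ ^ 2 / (2 * lam)) ≤ mye g lam y - mye g lam x - ⟪v, y - x⟫ := by
        set y' : EuclideanSpace ℝ (Fin n) := x + (x - y) with hy'
        have hmidpt : (1/2 : ℝ) • (y + y') = x := by rw [hy']; module
        have hmc := mye_midpoint g lam hconv hcont hlam y y'
        rw [hmidpt] at hmc
        have hup' : mye g lam y' - mye g lam x - ⟪v, y' - x⟫ ≤ ‖y' - x‖ ^ 2 / (2 * lam) :=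
          mye_upper g lam hconv hcont hlam hp y'
        have hyx : y' - x = -(y - x) := by rw [hy']; module
        have hnorm' : ‖y' - x‖ = ‖y - x‖ := by rw [hyx, norm_neg]
        have hinn' : ⟪v, y' - x⟫ = -⟪v, y - x⟫ := by rw [hyx, inner_neg_right]
        rw [hnorm', hinn'] at hup'
        linarith
      rw [abs_le]
      exact ⟨hlower, hupper⟩
    rw [hasGradientAt_iff_isLittleO]
    rw [Asymptotics.isLittleO_iff]
    intro c hc
    have hball : Metric.ball x (c * (2 * lam)) ∈ nhds x :=
      Metric.ball_mem_nhds x (by positivity)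
    filter_upwards [hball] with y hy
    have hyx : ‖y - x‖ < c * (2 * lam) := by
      rwa [Metric.mem_ball, dist_eq_norm] at hy
    have := key y
    rw [Real.norm_eq_abs]
    calc |mye g lam y - mye g lam x - ⟪v, y - x⟫| ≤ ‖y - x‖ ^ 2 / (2 * lam) := this
      _ = ‖y - x‖ * ‖y - x‖ / (2 * lam) := by ring
      _ ≤ (c * (2 * lam)) * ‖y - x‖ / (2 * lam) := by
          apply div_le_div_of_nonneg_right _ (by positivity)
          exact mul_le_mul_of_nonneg_right hyx.le (norm_nonneg _)
      _ = c * ‖y - x‖ := by field_simp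
end

section
/- Let g : ℝⁿ → ℝ be convex and L-Lipschitz with ∫ exp(−g(x)) dx = 1, let λ > 0, let g^λ be the Moreau–Yosida envelope of g, let Z_λ = ∫ exp(−g^λ(z)) dz, and set π(x) = exp(−g(x)) and π^λ(x) = exp(−g^λ(x))/Z_λ. Then for any f : ℝⁿ → ℝ that is integrable with respect to both π(x)dx and π^λ(x)dx, one has |∫ f π^λ dx − ∫ f π dx| ≤ (exp(L²λ) − 1) ∫ |f| π^λ dx. -/
open MeasureTheory

/-!
An `L`-Lipschitz `g` loses at most `L²λ/2` under Moreau–Yosida smoothing, since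
`g x - g z ≤ L‖x - z‖ ≤ L²λ/2 + ‖x - z‖²/(2λ)`. Hence `g - L²λ/2 ≤ g^λ ≤ g`, so with
`t = exp (L²λ/2)` the densities satisfy `π ≤ exp(-g^λ) ≤ t π`, whence `1 ≤ Z_λ ≤ t` and
`|π^λ - π| ≤ (t - 1) π^λ` pointwise. Integrating against `|f|` gives the bound with
`t - 1 ≤ exp (L²λ) - 1`.
-/

lemma mul_le_sq_mul_div_two_add_sq_div {lam : ℝ} (hlam : 0 < lam) (L r : ℝ) :
    L * r ≤ L ^ 2 * lam / 2 + r ^ 2 / (2 * lam) := by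
  have h : L ^ 2 * lam / 2 + r ^ 2 / (2 * lam) - L * r = (L * lam - r) ^ 2 / (2 * lam) := by
    field_simp
    ring
  have : 0 ≤ (L * lam - r) ^ 2 / (2 * lam) := by positivity
  linarith

lemma sub_le_add_sq_div_of_lipschitz {E : Type*} [SeminormedAddCommGroup E] {g : E → ℝ}
    {L lam : ℝ} (hLip : ∀ x y, |g x - g y| ≤ L * ‖x - y‖) (hlam : 0 < lam) (x z : E) :
    g x - L ^ 2 * lam / 2 ≤ g z + ‖x - z‖ ^ 2 / (2 * lam) := by
  have h₁ : g x - g z ≤ L * ‖x - z‖ := (le_abs_self _).trans (hLip x z)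
  have h₂ := mul_le_sq_mul_div_two_add_sq_div hlam L ‖x - z‖
  linarith

section MoreauYosida

variable {n : ℕ} {g : EuclideanSpace ℝ (Fin n) → ℝ} {L lam : ℝ}

lemma bddBelow_range_moreau (hLip : ∀ x y, |g x - g y| ≤ L * ‖x - y‖) (hlam : 0 < lam)
    (x : EuclideanSpace ℝ (Fin n)) :
    BddBelow (Set.range fun z => g z + ‖x - z‖ ^ 2 / (2 * lam)) :=
  ⟨g x - L ^ 2 * lam / 2, by
    rintro _ ⟨z, rfl⟩
    exact sub_le_add_sq_div_of_lipschitz hLip hlam x z⟩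

lemma mye_le_self (hLip : ∀ x y, |g x - g y| ≤ L * ‖x - y‖) (hlam : 0 < lam)
    (x : EuclideanSpace ℝ (Fin n)) : mye g lam x ≤ g x := by
  simpa [mye] using ciInf_le (bddBelow_range_moreau hLip hlam x) x

lemma sub_le_mye (hLip : ∀ x y, |g x - g y| ≤ L * ‖x - y‖) (hlam : 0 < lam)
    (x : EuclideanSpace ℝ (Fin n)) : g x - L ^ 2 * lam / 2 ≤ mye g lam x :=
  le_ciInf (sub_le_add_sq_div_of_lipschitz hLip hlam x)

/-- Translating the minimiser `z` by `x - y` compares the two infima. -/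
lemma mye_le_mye_add (hLip : ∀ x y, |g x - g y| ≤ L * ‖x - y‖) (hlam : 0 < lam)
    (x y : EuclideanSpace ℝ (Fin n)) : mye g lam x ≤ mye g lam y + L * ‖x - y‖ := by
  suffices mye g lam x - L * ‖x - y‖ ≤ mye g lam y by linarith
  refine le_ciInf fun z => ?_
  have h₁ : mye g lam x ≤ g (z + (x - y)) + ‖x - (z + (x - y))‖ ^ 2 / (2 * lam) :=
    ciInf_le (bddBelow_range_moreau hLip hlam x) _
  have h₂ : g (z + (x - y)) - g z ≤ L * ‖x - y‖ := by
    simpa using (le_abs_self _).trans (hLip (z + (x - y)) z)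
  rw [show x - (z + (x - y)) = y - z by abel] at h₁
  linarith

lemma continuous_mye (hLip : ∀ x y, |g x - g y| ≤ L * ‖x - y‖) (hlam : 0 < lam) :
    Continuous (mye g lam) :=
  (LipschitzWith.of_le_add_mul' L fun x y => by
    simpa [dist_eq_norm] using mye_le_mye_add hLip hlam x y).continuous

end MoreauYosida

section NormalizedDensity

variable {α : Type*} [MeasurableSpace α] {μ : Measure α} {p q : α → ℝ} {t : ℝ}

lemma integrable_of_le_of_le_mul (hp : Integrable p μ) (hq : AEStronglyMeasurable q μ)
    (hp0 : ∀ x, 0 ≤ p x) (hpq : ∀ x, p x ≤ q x) (hqt : ∀ x, q x ≤ t * p x) :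
    Integrable q μ :=
  (hp.const_mul t).mono' hq <| .of_forall fun x => by
    rw [Real.norm_eq_abs, abs_of_nonneg ((hp0 x).trans (hpq x))]
    exact hqt x

lemma abs_div_integral_sub_le (hnorm : ∫ x, p x ∂μ = 1) (hq : AEStronglyMeasurable q μ)
    (hp0 : ∀ x, 0 ≤ p x) (hpq : ∀ x, p x ≤ q x) (hqt : ∀ x, q x ≤ t * p x) (x : α) :
    |q x / ∫ y, q y ∂μ - p x| ≤ (t - 1) * (q x / ∫ y, q y ∂μ) := by
  have hp := integrable_of_integral_eq_one hnorm
  have hqi := integrable_of_le_of_le_mul hp hq hp0 hpq hqt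
  set Z := ∫ y, q y ∂μ
  have hZ₁ : 1 ≤ Z := hnorm ▸ integral_mono hp hqi hpq
  have hZt : Z ≤ t := by
    calc Z ≤ ∫ y, t * p y ∂μ := integral_mono hqi (hp.const_mul t) hqt
      _ = t := by rw [integral_const_mul, hnorm, mul_one]
  set a := q x / Z
  have ha0 : 0 ≤ a := div_nonneg ((hp0 x).trans (hpq x)) (by linarith)
  have hpa : p x ≤ t * a := by
    calc p x ≤ q x := hpq x
      _ = Z * a := by simp only [a]; field_simp
      _ ≤ t * a := by gcongr
  have hap : a ≤ t * p x := (div_le_self ((hp0 x).trans (hpq x)) hZ₁).trans (hqt x)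
  have ht : 1 ≤ t := hZ₁.trans hZt
  rw [abs_sub_le_iff]
  constructor
  · nlinarith [mul_nonneg (sub_nonneg.2 ht) ha0]
  · linarith

lemma abs_integral_mul_sub_integral_mul_le {f a : α → ℝ} {K : ℝ}
    (hfa : Integrable (fun x => f x * a x) μ) (hfp : Integrable (fun x => f x * p x) μ)
    (ha0 : ∀ x, 0 ≤ a x) (hap : ∀ x, |a x - p x| ≤ K * a x) :
    |(∫ x, f x * a x ∂μ) - ∫ x, f x * p x ∂μ| ≤ K * ∫ x, |f x| * a x ∂μ := by
  have hfa_abs : Integrable (fun x => |f x| * a x) μ := by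
    simpa only [abs_mul, abs_of_nonneg (ha0 _)] using hfa.abs
  rw [← integral_sub hfa hfp, ← integral_const_mul]
  refine (abs_integral_le_integral_abs).trans (integral_mono (hfa.sub hfp).abs
    (hfa_abs.const_mul K) fun x => ?_)
  calc |f x * a x - f x * p x| = |f x| * |a x - p x| := by rw [← mul_sub, abs_mul]
    _ ≤ |f x| * (K * a x) := by gcongr; exact hap x
    _ = K * (|f x| * a x) := by ring

end NormalizedDensity

theorem stmt_3_general {n : ℕ} (g : EuclideanSpace ℝ (Fin n) → ℝ) (L lam : ℝ)
    (hLip : ∀ x y, |g x - g y| ≤ L * ‖x - y‖)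
    (hlam : 0 < lam)
    (hnorm : ∫ x : EuclideanSpace ℝ (Fin n), Real.exp (-g x) = 1)
    (f : EuclideanSpace ℝ (Fin n) → ℝ)
    (hf : Integrable (fun x => f x * Real.exp (-g x)))
    (hflam : Integrable (fun x =>
      f x * (Real.exp (-(mye g lam x)) /
        ∫ z : EuclideanSpace ℝ (Fin n), Real.exp (-(mye g lam z))))) :
    |(∫ x, f x * (Real.exp (-(mye g lam x)) /
          ∫ z : EuclideanSpace ℝ (Fin n), Real.exp (-(mye g lam z)))) -
        ∫ x, f x * Real.exp (-g x)| ≤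
      (Real.exp (L ^ 2 * lam) - 1) *
        ∫ x, |f x| * (Real.exp (-(mye g lam x)) /
          ∫ z : EuclideanSpace ℝ (Fin n), Real.exp (-(mye g lam z))) := by
  have hpq x : Real.exp (-g x) ≤ Real.exp (-(mye g lam x)) := by
    gcongr; exact mye_le_self hLip hlam x
  have hqt x : Real.exp (-(mye g lam x)) ≤ Real.exp (L ^ 2 * lam / 2) * Real.exp (-g x) := by
    rw [← Real.exp_add]
    gcongr
    linarith [sub_le_mye hLip hlam x]
  have hq : AEStronglyMeasurable (fun x => Real.exp (-(mye g lam x))) :=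
    (continuous_mye hLip hlam).neg.rexp.aestronglyMeasurable
  calc _ ≤ (Real.exp (L ^ 2 * lam / 2) - 1) * ∫ x, |f x| * (Real.exp (-(mye g lam x)) /
          ∫ z : EuclideanSpace ℝ (Fin n), Real.exp (-(mye g lam z))) :=
        abs_integral_mul_sub_integral_mul_le hflam hf (fun x => by positivity)
          (abs_div_integral_sub_le hnorm hq (fun x => (Real.exp_pos _).le) hpq hqt)
    _ ≤ _ := by
        gcongr
        nlinarith [sq_nonneg L]

theorem stmt_3 {n : ℕ} (g : EuclideanSpace ℝ (Fin n) → ℝ) (L lam : ℝ)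
    (hconv : ConvexOn ℝ Set.univ g)
    (hLip : ∀ x y, |g x - g y| ≤ L * ‖x - y‖)
    (hlam : 0 < lam)
    (hnorm : ∫ x : EuclideanSpace ℝ (Fin n), Real.exp (-g x) = 1)
    (f : EuclideanSpace ℝ (Fin n) → ℝ)
    (hf : Integrable (fun x => f x * Real.exp (-g x)))
    (hflam : Integrable (fun x =>
      f x * (Real.exp (-(mye g lam x)) /
        ∫ z : EuclideanSpace ℝ (Fin n), Real.exp (-(mye g lam z))))) :
    |(∫ x, f x * (Real.exp (-(mye g lam x)) /
          ∫ z : EuclideanSpace ℝ (Fin n), Real.exp (-(mye g lam z)))) -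
        ∫ x, f x * Real.exp (-g x)| ≤
      (Real.exp (L ^ 2 * lam) - 1) *
        ∫ x, |f x| * (Real.exp (-(mye g lam x)) /
          ∫ z : EuclideanSpace ℝ (Fin n), Real.exp (-(mye g lam z))) :=
  stmt_3_general g L lam hLip hlam hnorm f hf hflam
end

section
/- Let g : ℝⁿ → ℝ be a convex continuous function and let 0 < λ₁ ≤ λ₂. Then the Moreau–Yosida envelopes g^{λ₁} and g^{λ₂} are differentiable and satisfy ‖∇g^{λ₁}(x)‖ ≥ ‖∇g^{λ₂}(x)‖ for every x ∈ ℝⁿ. -/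
/-!
A convex continuous `g` has a continuous affine minorant, so `z ↦ g z + ‖x - z‖² / (2λ)` is
coercive and attains its minimum at some proximal point `p`. Comparing `p` with the points
`p + t (z - p)` and letting `t → 0` gives the variational inequality
`⟪x - p, z - p⟫ ≤ λ (g z - g p)`. It squeezes the envelope `g^λ` between `g^λ(x) + ⟪v, y - x⟫`
and the same plus `‖y - x‖² / (2λ)`, where `v = (x - p) / λ`, so `v` is its gradient at `x`.

For the proximal points `p₁`, `p₂` of `x` with parameters `λ₁ ≤ λ₂`, adding `λ₂` times the
variational inequality of `p₁` at `p₂` to `λ₁` times that of `p₂` at `p₁` eliminates `g` and,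
with Cauchy–Schwarz, leaves `(λ₂ a - λ₁ b)(a - b) ≤ 0` for `a = ‖x - p₁‖`, `b = ‖x - p₂‖`.
This forces `b / λ₂ ≤ a / λ₁`.
-/

open Filter Set Topology
open scoped RealInnerProductSpace

theorem ConvexOn.exists_affine_le {F : Type*} [TopologicalSpace F] [AddCommGroup F] [Module ℝ F]
    [IsTopologicalAddGroup F] [ContinuousSMul ℝ F] [LocallyConvexSpace ℝ F] {g : F → ℝ}
    (hconv : ConvexOn ℝ univ g) (hg : LowerSemicontinuous g) :
    ∃ (c : ℝ) (L : F →L[ℝ] ℝ), ∀ z, c + L z ≤ g z := by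
  obtain ⟨L, c, hle, -⟩ := hconv.exists_affine_le_of_lt (𝕜 := ℝ) (mem_univ 0)
    (sub_one_lt (g 0)) isClosed_univ (hg.lowerSemicontinuousOn univ)
  exact ⟨c, L, fun z => by simpa [add_comm c] using hle ⟨z, mem_univ z⟩⟩

theorem hasGradientAt_of_le_of_le {E : Type*} [NormedAddCommGroup E] [InnerProductSpace ℝ E]
    [CompleteSpace E] {f : E → ℝ} {v x : E} {C : ℝ}
    (hlow : ∀ y, f x + ⟪v, y - x⟫ ≤ f y) (hup : ∀ y, f y ≤ f x + ⟪v, y - x⟫ + C * ‖y - x‖ ^ 2) :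
    HasGradientAt f v x := by
  rw [hasGradientAt_iff_isLittleO]
  have hbigO : (fun y => f y - f x - ⟪v, y - x⟫) =O[𝓝 x] fun y => ‖y - x‖ ^ 2 := by
    refine Asymptotics.IsBigO.of_bound C (Eventually.of_forall fun y => ?_)
    rw [Real.norm_of_nonneg (by linarith [hlow y]), Real.norm_of_nonneg (by positivity)]
    linarith [hup y]
  have hsub : Tendsto (fun y => y - x) (𝓝 x) (𝓝 0) := tendsto_sub_nhds_zero_iff.mpr tendsto_id
  exact hbigO.trans_isLittleO ((Asymptotics.isLittleO_norm_pow_id one_lt_two).comp_tendsto hsub)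

section Prox

variable {E : Type*} [NormedAddCommGroup E] {g : E → ℝ} {lam : ℝ} {x p : E}

def IsProxPoint (g : E → ℝ) (lam : ℝ) (x p : E) : Prop :=
  ∀ z, g p + ‖x - p‖ ^ 2 / (2 * lam) ≤ g z + ‖x - z‖ ^ 2 / (2 * lam)

theorem IsProxPoint.iInf_eq (hp : IsProxPoint g lam x p) :
    ⨅ z, g z + ‖x - z‖ ^ 2 / (2 * lam) = g p + ‖x - p‖ ^ 2 / (2 * lam) :=
  le_antisymm (ciInf_le ⟨_, forall_mem_range.2 hp⟩ p) (le_ciInf hp)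

theorem tendsto_add_norm_sub_sq_div_cocompact [NormedSpace ℝ E] [ProperSpace E] {c : ℝ}
    {L : E →L[ℝ] ℝ} (hL : ∀ z, c + L z ≤ g z) (hl : 0 < lam) (x : E) :
    Tendsto (fun z => g z + ‖x - z‖ ^ 2 / (2 * lam)) (cocompact E) atTop := by
  have hdist := tendsto_dist_right_cocompact_atTop x
  have hquad : Tendsto (fun z => c + L x + dist z x * (dist z x / (2 * lam) - ‖L‖))
      (cocompact E) atTop :=
    tendsto_atTop_add_const_left _ _ <| hdist.atTop_mul_atTop₀ <|
      tendsto_atTop_add_const_right _ _ (hdist.atTop_div_const (by positivity))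
  refine tendsto_atTop_mono (fun z => ?_) hquad
  have hLz : L x - ‖L‖ * dist z x ≤ L z := by
    have := (le_abs_self _).trans (L.le_opNorm (x - z))
    rw [map_sub, ← dist_eq_norm, dist_comm] at this
    linarith
  rw [← dist_eq_norm, dist_comm x z]
  linarith [hL z, show dist z x * (dist z x / (2 * lam) - ‖L‖)
    = dist z x ^ 2 / (2 * lam) - ‖L‖ * dist z x by ring]

theorem ConvexOn.exists_isProxPoint [NormedSpace ℝ E] [ProperSpace E]
    (hconv : ConvexOn ℝ univ g) (hcont : Continuous g) (hl : 0 < lam) (x : E) :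
    ∃ p, IsProxPoint g lam x p := by
  obtain ⟨c, L, hL⟩ := hconv.exists_affine_le hcont.lowerSemicontinuous
  exact (hcont.add (by fun_prop)).exists_forall_le
    (tendsto_add_norm_sub_sq_div_cocompact hL hl x)

variable [InnerProductSpace ℝ E]

namespace IsProxPoint

theorem inner_le_add_mul (hp : IsProxPoint g lam x p) (hconv : ConvexOn ℝ univ g) (hl : 0 < lam)
    (z : E) {t : ℝ} (ht₀ : 0 < t) (ht₁ : t ≤ 1) :
    ⟪x - p, z - p⟫ ≤ lam * (g z - g p) + t * ‖z - p‖ ^ 2 / 2 := by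
  have hseg : g (p + t • (z - p)) ≤ (1 - t) * g p + t * g z := by
    have := hconv.2 (mem_univ p) (mem_univ z) (sub_nonneg.mpr ht₁) ht₀.le (sub_add_cancel 1 t)
    rwa [show (1 - t) • p + t • z = p + t • (z - p) by module] at this
  have hdist : ‖x - (p + t • (z - p))‖ ^ 2
      = ‖x - p‖ ^ 2 - 2 * t * ⟪x - p, z - p⟫ + t ^ 2 * ‖z - p‖ ^ 2 := by
    rw [show x - (p + t • (z - p)) = (x - p) - t • (z - p) by module, norm_sub_sq_real,
      real_inner_smul_right, norm_smul, Real.norm_eq_abs, mul_pow, sq_abs]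
    ring
  have hmin := hp (p + t • (z - p))
  rw [hdist, add_div, sub_div] at hmin
  have hprod : 2 * t * ⟪x - p, z - p⟫ - t ^ 2 * ‖z - p‖ ^ 2 ≤ 2 * lam * (t * (g z - g p)) := by
    rw [← div_le_iff₀' (by positivity), sub_div]
    linarith
  refine le_of_mul_le_mul_left ?_ (by positivity : 0 < 2 * t)
  linarith

theorem inner_le (hp : IsProxPoint g lam x p) (hconv : ConvexOn ℝ univ g) (hl : 0 < lam)
    (z : E) : ⟪x - p, z - p⟫ ≤ lam * (g z - g p) := by
  have hlim : Tendsto (fun t : ℝ => lam * (g z - g p) + t * ‖z - p‖ ^ 2 / 2) (𝓝[>] 0)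
      (𝓝 (lam * (g z - g p))) := by
    refine tendsto_nhdsWithin_of_tendsto_nhds ?_
    simpa using (Continuous.tendsto (by fun_prop :
      Continuous fun t : ℝ => lam * (g z - g p) + t * ‖z - p‖ ^ 2 / 2) 0)
  refine ge_of_tendsto hlim (eventually_of_mem (Ioc_mem_nhdsGT one_pos) fun t ht => ?_)
  exact hp.inner_le_add_mul hconv hl z ht.1 ht.2

theorem le_add_inner (hp : IsProxPoint g lam x p) (hconv : ConvexOn ℝ univ g) (hl : 0 < lam)
    (y z : E) :
    g p + ‖x - p‖ ^ 2 / (2 * lam) + ⟪lam⁻¹ • (x - p), y - x⟫ ≤ g z + ‖y - z‖ ^ 2 / (2 * lam) := by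
  have hsub := hp.inner_le hconv hl z
  rw [real_inner_comm] at hsub
  have hsq : 0 ≤ ‖(y - z) - (x - p)‖ ^ 2 := by positivity
  have hsplit : ⟪y - z, x - p⟫ = ⟪y - x, x - p⟫ + ‖x - p‖ ^ 2 - ⟪z - p, x - p⟫ := by
    rw [show y - z = (y - x) + (x - p) - (z - p) by abel, inner_sub_left, inner_add_left,
      real_inner_self_eq_norm_sq]
  rw [norm_sub_sq_real, hsplit] at hsq
  calc g p + ‖x - p‖ ^ 2 / (2 * lam) + ⟪lam⁻¹ • (x - p), y - x⟫
      = (2 * lam * g p + ‖x - p‖ ^ 2 + 2 * ⟪y - x, x - p⟫) / (2 * lam) := by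
        rw [real_inner_smul_left, real_inner_comm]
        field_simp
    _ ≤ (2 * lam * g z + ‖y - z‖ ^ 2) / (2 * lam) :=
        div_le_div_of_nonneg_right (by linarith) (by positivity)
    _ = g z + ‖y - z‖ ^ 2 / (2 * lam) := by field_simp

theorem bddBelow_range (hp : IsProxPoint g lam x p) (hconv : ConvexOn ℝ univ g) (hl : 0 < lam)
    (y : E) : BddBelow (range fun z => g z + ‖y - z‖ ^ 2 / (2 * lam)) :=
  ⟨_, forall_mem_range.2 (hp.le_add_inner hconv hl y)⟩

theorem hasGradientAt_iInf [CompleteSpace E] (hp : IsProxPoint g lam x p)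
    (hconv : ConvexOn ℝ univ g) (hl : 0 < lam) :
    HasGradientAt (fun y => ⨅ z, g z + ‖y - z‖ ^ 2 / (2 * lam)) (lam⁻¹ • (x - p)) x := by
  refine hasGradientAt_of_le_of_le (C := (2 * lam)⁻¹) (fun y => ?_) (fun y => ?_) <;>
    rw [hp.iInf_eq]
  · exact le_ciInf (hp.le_add_inner hconv hl y)
  · refine (ciInf_le (hp.bddBelow_range hconv hl y) p).trans_eq ?_
    rw [show y - p = (y - x) + (x - p) by abel, norm_add_sq_real, real_inner_smul_left,
      real_inner_comm]
    field_simp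
    ring

theorem norm_inv_smul_sub_le {lam₁ lam₂ : ℝ} {p₁ p₂ : E} (hp₁ : IsProxPoint g lam₁ x p₁)
    (hp₂ : IsProxPoint g lam₂ x p₂) (hconv : ConvexOn ℝ univ g) (h₁ : 0 < lam₁)
    (h₁₂ : lam₁ ≤ lam₂) : ‖lam₂⁻¹ • (x - p₂)‖ ≤ ‖lam₁⁻¹ • (x - p₁)‖ := by
  have h₂ : 0 < lam₂ := h₁.trans_le h₁₂
  have s₁ := hp₁.inner_le hconv h₁ p₂
  have s₂ := hp₂.inner_le hconv h₂ p₁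
  rw [show p₂ - p₁ = (x - p₁) - (x - p₂) by abel, inner_sub_right,
    real_inner_self_eq_norm_sq] at s₁
  rw [show p₁ - p₂ = (x - p₂) - (x - p₁) by abel, inner_sub_right,
    real_inner_self_eq_norm_sq, real_inner_comm] at s₂
  have hcs := real_inner_le_norm (x - p₁) (x - p₂)
  set a := ‖x - p₁‖
  set b := ‖x - p₂‖
  have hkey : (lam₂ * a - lam₁ * b) * (a - b) ≤ 0 := by
    nlinarith [mul_le_mul_of_nonneg_left s₁ h₂.le, mul_le_mul_of_nonneg_left s₂ h₁.le,
      mul_le_mul_of_nonneg_left hcs (add_pos h₁ h₂).le]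
  have hab : lam₁ * b ≤ lam₂ * a := by
    by_contra! hlt
    have hba : a < b := lt_of_mul_lt_mul_left
      ((mul_le_mul_of_nonneg_right h₁₂ (norm_nonneg _)).trans_lt hlt) h₁.le
    linarith [mul_pos_of_neg_of_neg (sub_neg.2 hlt) (sub_neg.2 hba)]
  rw [norm_smul, norm_smul, Real.norm_of_nonneg (inv_nonneg.2 h₁.le),
    Real.norm_of_nonneg (inv_nonneg.2 h₂.le), inv_mul_eq_div, inv_mul_eq_div,
    div_le_div_iff₀ h₂ h₁]
  linarith

end IsProxPoint

end Prox

theorem stmt_6 {n : ℕ} (g : EuclideanSpace ℝ (Fin n) → ℝ) (lam₁ lam₂ : ℝ)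
    (hconv : ConvexOn ℝ Set.univ g) (hcont : Continuous g)
    (h₁ : 0 < lam₁) (h₁₂ : lam₁ ≤ lam₂) :
    Differentiable ℝ (mye g lam₁) ∧ Differentiable ℝ (mye g lam₂) ∧
    ∀ x : EuclideanSpace ℝ (Fin n),
      ‖gradient (mye g lam₂) x‖ ≤ ‖gradient (mye g lam₁) x‖ := by
  have hgrad : ∀ lam, 0 < lam → ∀ x, ∃ p, IsProxPoint g lam x p ∧
      HasGradientAt (mye g lam) (lam⁻¹ • (x - p)) x := fun lam hl x =>
    let ⟨p, hp⟩ := hconv.exists_isProxPoint hcont hl x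
    ⟨p, hp, hp.hasGradientAt_iInf hconv hl⟩
  have h₂ : 0 < lam₂ := h₁.trans_le h₁₂
  refine ⟨fun x => ?_, fun x => ?_, fun x => ?_⟩
  · obtain ⟨_, -, hg⟩ := hgrad lam₁ h₁ x
    exact hg.differentiableAt
  · obtain ⟨_, -, hg⟩ := hgrad lam₂ h₂ x
    exact hg.differentiableAt
  · obtain ⟨p₁, hp₁, hg₁⟩ := hgrad lam₁ h₁ x
    obtain ⟨p₂, hp₂, hg₂⟩ := hgrad lam₂ h₂ x
    rw [hg₁.gradient, hg₂.gradient]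
    exact hp₁.norm_inv_smul_sub_le hp₂ hconv h₁ h₁₂
end

section
/- Let g : ℝⁿ → ℝ be convex and L-Lipschitz with ∫ exp(−g(x)) dx = 1, let λ > 0, let g^λ be the Moreau–Yosida envelope of g, let Z_λ = ∫ exp(−g^λ(z)) dz, and set π(x) = exp(−g(x)) and π^λ(x) = exp(−g^λ(x))/Z_λ. Then for any nonnegative f : ℝⁿ → ℝ integrable with respect to both π(x)dx and π^λ(x)dx, one has exp(−L²λ/2) ∫ f π dx ≤ ∫ f π^λ dx ≤ exp(L²λ/2) ∫ f π dx. -/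
/-!
Since `g` is `L`-Lipschitz, `g x ≤ g z + L‖x - z‖ ≤ g z + ‖x - z‖² / (2λ) + L²λ/2`, so
`g - L²λ/2 ≤ g^λ ≤ g` pointwise. Hence `π ≤ exp (-g^λ) ≤ exp (L²λ/2) π`, which integrates to
`1 ≤ Z_λ ≤ exp (L²λ/2)`, and the two bounds combine into the claimed sandwich for `f π^λ`.
-/

open MeasureTheory

open scoped NNReal

section Sandwich

variable {α : Type*} [MeasurableSpace α] {μ : Measure α} {p q f : α → ℝ} {C : ℝ}

theorem one_le_integral_le_of_le_mul (hpq : ∀ x, p x ≤ q x) (hqp : ∀ x, q x ≤ C * p x)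
    (hp : ∫ x, p x ∂μ = 1) (hq : Integrable q μ) :
    1 ≤ ∫ x, q x ∂μ ∧ ∫ x, q x ∂μ ≤ C := by
  have hp_int : Integrable p μ := Integrable.of_integral_ne_zero (by simp [hp])
  constructor
  · rw [← hp]
    exact integral_mono hp_int hq hpq
  · calc ∫ x, q x ∂μ ≤ ∫ x, C * p x ∂μ := integral_mono hq (hp_int.const_mul C) hqp
      _ = C := by rw [integral_const_mul, hp, mul_one]

theorem integral_mul_div_integral_sandwich (hp0 : ∀ x, 0 ≤ p x) (hpq : ∀ x, p x ≤ q x)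
    (hqp : ∀ x, q x ≤ C * p x) (hp : ∫ x, p x ∂μ = 1) (hq : AEStronglyMeasurable q μ)
    (hf0 : ∀ x, 0 ≤ f x) (hfp : Integrable (fun x => f x * p x) μ)
    (hfq : Integrable (fun x => f x * (q x / ∫ z, q z ∂μ)) μ) :
    C⁻¹ * ∫ x, f x * p x ∂μ ≤ ∫ x, f x * (q x / ∫ z, q z ∂μ) ∂μ ∧
      ∫ x, f x * (q x / ∫ z, q z ∂μ) ∂μ ≤ C * ∫ x, f x * p x ∂μ := by
  have hq0 : ∀ x, 0 ≤ q x := fun x => (hp0 x).trans (hpq x)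
  have hq_int : Integrable q μ :=
    ((Integrable.of_integral_ne_zero (f := p) (by simp [hp])).const_mul C).mono' hq
      (Filter.Eventually.of_forall fun x => by rw [Real.norm_of_nonneg (hq0 x)]; exact hqp x)
  obtain ⟨hZ1, hZC⟩ := one_le_integral_le_of_le_mul hpq hqp hp hq_int
  set Z := ∫ z, q z ∂μ
  have hZ0 : 0 < Z := one_pos.trans_le hZ1
  constructor
  · rw [← integral_const_mul]
    refine integral_mono (hfp.const_mul _) hfq fun x => ?_
    calc C⁻¹ * (f x * p x) ≤ Z⁻¹ * (f x * q x) :=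
          mul_le_mul (inv_anti₀ hZ0 hZC) (mul_le_mul_of_nonneg_left (hpq x) (hf0 x))
            (mul_nonneg (hf0 x) (hp0 x)) (inv_nonneg.mpr hZ0.le)
      _ = f x * (q x / Z) := by ring
  · rw [← integral_const_mul]
    refine integral_mono hfq (hfp.const_mul _) fun x => ?_
    calc f x * (q x / Z) = (f x * q x) / Z := by ring
      _ ≤ f x * q x := div_le_self (mul_nonneg (hf0 x) (hq0 x)) hZ1
      _ ≤ f x * (C * p x) := mul_le_mul_of_nonneg_left (hqp x) (hf0 x)
      _ = C * (f x * p x) := by ring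

end Sandwich

section Envelope

variable {E : Type*} [SeminormedAddCommGroup E] {g : E → ℝ} {K : ℝ≥0} {lam : ℝ}

theorem LipschitzWith.sub_le_add_sq_div (hg : LipschitzWith K g) (hlam : 0 < lam) (x z : E) :
    g x - K ^ 2 * lam / 2 ≤ g z + ‖x - z‖ ^ 2 / (2 * lam) := by
  have hxz : g x ≤ g z + K * ‖x - z‖ := by simpa [dist_eq_norm] using hg.le_add_mul x z
  have amgm : K * ‖x - z‖ ≤ ‖x - z‖ ^ 2 / (2 * lam) + K ^ 2 * lam / 2 := by
    have hsq : 0 ≤ (‖x - z‖ - K * lam) ^ 2 / (2 * lam) := by positivity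
    have hexpand : (‖x - z‖ - K * lam) ^ 2 / (2 * lam)
        = ‖x - z‖ ^ 2 / (2 * lam) + K ^ 2 * lam / 2 - K * ‖x - z‖ := by
      field_simp; ring
    linarith
  linarith

theorem LipschitzWith.bddBelow_range_add_sq_div (hg : LipschitzWith K g) (hlam : 0 < lam)
    (x : E) : BddBelow (Set.range fun z => g z + ‖x - z‖ ^ 2 / (2 * lam)) :=
  ⟨g x - K ^ 2 * lam / 2, by rintro _ ⟨z, rfl⟩; exact hg.sub_le_add_sq_div hlam x z⟩

end Envelope

section MoreauYosida

variable {n : ℕ} {g : EuclideanSpace ℝ (Fin n) → ℝ} {K : ℝ≥0} {lam : ℝ}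

theorem mye_le_self_of_lipschitzWith (hg : LipschitzWith K g) (hlam : 0 < lam)
    (x : EuclideanSpace ℝ (Fin n)) : mye g lam x ≤ g x := by
  simpa [mye] using ciInf_le (hg.bddBelow_range_add_sq_div hlam x) x

theorem sub_le_mye_of_lipschitzWith (hg : LipschitzWith K g) (hlam : 0 < lam)
    (x : EuclideanSpace ℝ (Fin n)) : g x - K ^ 2 * lam / 2 ≤ mye g lam x :=
  le_ciInf (hg.sub_le_add_sq_div hlam x)

/-- Comparing the infima defining `mye g lam x` and `mye g lam y` at `z + (x - y)` and `z`. -/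
theorem lipschitzWith_mye (hg : LipschitzWith K g) (hlam : 0 < lam) :
    LipschitzWith K (mye g lam) := by
  refine LipschitzWith.of_le_add_mul K fun x y => ?_
  rw [dist_eq_norm]
  suffices ∀ z, mye g lam x - K * ‖x - y‖ ≤ g z + ‖y - z‖ ^ 2 / (2 * lam) from
    sub_le_iff_le_add.mp (le_ciInf this)
  intro z
  have hinf : mye g lam x ≤ g (z + (x - y)) + ‖x - (z + (x - y))‖ ^ 2 / (2 * lam) :=
    ciInf_le (hg.bddBelow_range_add_sq_div hlam x) _
  have hshift : g (z + (x - y)) ≤ g z + K * ‖x - y‖ := by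
    simpa [dist_eq_norm] using hg.le_add_mul (z + (x - y)) z
  rw [show x - (z + (x - y)) = y - z by abel] at hinf
  linarith

end MoreauYosida

theorem stmt_10_general {n : ℕ} (g : EuclideanSpace ℝ (Fin n) → ℝ) (L lam : ℝ)
    (hLip : ∀ x y, |g x - g y| ≤ L * ‖x - y‖)
    (hlam : 0 < lam)
    (hnorm : ∫ x : EuclideanSpace ℝ (Fin n), Real.exp (-g x) = 1)
    (f : EuclideanSpace ℝ (Fin n) → ℝ) (hfpos : ∀ x, 0 ≤ f x)
    (hf : Integrable (fun x => f x * Real.exp (-g x)))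
    (hflam : Integrable (fun x =>
      f x * (Real.exp (-(mye g lam x)) /
        ∫ z : EuclideanSpace ℝ (Fin n), Real.exp (-(mye g lam z))))) :
    Real.exp (-(L ^ 2 * lam / 2)) * (∫ x, f x * Real.exp (-g x)) ≤
      (∫ x, f x * (Real.exp (-(mye g lam x)) /
        ∫ z : EuclideanSpace ℝ (Fin n), Real.exp (-(mye g lam z)))) ∧
    (∫ x, f x * (Real.exp (-(mye g lam x)) /
        ∫ z : EuclideanSpace ℝ (Fin n), Real.exp (-(mye g lam z)))) ≤
      Real.exp (L ^ 2 * lam / 2) * ∫ x, f x * Real.exp (-g x) := by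
  have hg : LipschitzWith L.toNNReal g :=
    LipschitzWith.of_dist_le' fun x y => by simpa [Real.dist_eq, dist_eq_norm] using hLip x y
  have hlower : ∀ x, g x - L ^ 2 * lam / 2 ≤ mye g lam x := fun x => by
    have hK : (L.toNNReal : ℝ) ^ 2 ≤ L ^ 2 := by
      rw [Real.coe_toNNReal', ← sq_abs L]
      exact pow_le_pow_left₀ (le_max_right L 0) (max_le (le_abs_self L) (abs_nonneg L)) 2
    have : (L.toNNReal : ℝ) ^ 2 * lam / 2 ≤ L ^ 2 * lam / 2 := by gcongr
    linarith [sub_le_mye_of_lipschitzWith hg hlam x]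
  rw [Real.exp_neg]
  refine integral_mul_div_integral_sandwich (fun x => (Real.exp_pos _).le)
    (fun x => Real.exp_le_exp.mpr (neg_le_neg (mye_le_self_of_lipschitzWith hg hlam x)))
    (fun x => ?_) hnorm (lipschitzWith_mye hg hlam).continuous.neg.rexp.aestronglyMeasurable
    hfpos hf hflam
  rw [← Real.exp_add]
  exact Real.exp_le_exp.mpr (by linarith [hlower x])

theorem stmt_10 {n : ℕ} (g : EuclideanSpace ℝ (Fin n) → ℝ) (L lam : ℝ)
    (hconv : ConvexOn ℝ Set.univ g)
    (hLip : ∀ x y, |g x - g y| ≤ L * ‖x - y‖)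
    (hlam : 0 < lam)
    (hnorm : ∫ x : EuclideanSpace ℝ (Fin n), Real.exp (-g x) = 1)
    (f : EuclideanSpace ℝ (Fin n) → ℝ) (hfpos : ∀ x, 0 ≤ f x)
    (hf : Integrable (fun x => f x * Real.exp (-g x)))
    (hflam : Integrable (fun x =>
      f x * (Real.exp (-(mye g lam x)) /
        ∫ z : EuclideanSpace ℝ (Fin n), Real.exp (-(mye g lam z))))) :
    Real.exp (-(L ^ 2 * lam / 2)) * (∫ x, f x * Real.exp (-g x)) ≤
      (∫ x, f x * (Real.exp (-(mye g lam x)) /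
        ∫ z : EuclideanSpace ℝ (Fin n), Real.exp (-(mye g lam z)))) ∧
    (∫ x, f x * (Real.exp (-(mye g lam x)) /
        ∫ z : EuclideanSpace ℝ (Fin n), Real.exp (-(mye g lam z)))) ≤
      Real.exp (L ^ 2 * lam / 2) * ∫ x, f x * Real.exp (-g x) :=
  stmt_10_general g L lam hLip hlam hnorm f hfpos hf hflam
end

section
/- Let g : ℝⁿ → ℝ be convex and L-Lipschitz with ∫ exp(−g(x)) dx = 1, let λ > 0, let g^λ be the Moreau–Yosida envelope of g, let Z_λ = ∫ exp(−g^λ(z)) dz, and set π(x) = exp(−g(x)) and π^λ(x) = exp(−g^λ(x))/Z_λ. Then for any nonnegative f : ℝⁿ → ℝ integrable with respect to both π(x)dx and π^λ(x)dx, one has |∫ f π^λ dx − ∫ f π dx| ≤ (exp(L²λ/2) − 1) ∫ f π dx. -/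
open MeasureTheory

theorem stmt_11 {n : ℕ} (g : EuclideanSpace ℝ (Fin n) → ℝ) (L lam : ℝ)
    (hconv : ConvexOn ℝ Set.univ g)
    (hLip : ∀ x y, |g x - g y| ≤ L * ‖x - y‖)
    (hlam : 0 < lam)
    (hnorm : ∫ x : EuclideanSpace ℝ (Fin n), Real.exp (-g x) = 1)
    (f : EuclideanSpace ℝ (Fin n) → ℝ) (hfpos : ∀ x, 0 ≤ f x)
    (hf : Integrable (fun x => f x * Real.exp (-g x)))
    (hflam : Integrable (fun x =>
      f x * (Real.exp (-(mye g lam x)) /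
        ∫ z : EuclideanSpace ℝ (Fin n), Real.exp (-(mye g lam z))))) :
    |(∫ x, f x * (Real.exp (-(mye g lam x)) /
          ∫ z : EuclideanSpace ℝ (Fin n), Real.exp (-(mye g lam z)))) -
        ∫ x, f x * Real.exp (-g x)| ≤
      (Real.exp (L ^ 2 * lam / 2) - 1) * ∫ x, f x * Real.exp (-g x) := by
  set c : ℝ := L ^ 2 * lam / 2 with hc_def
  have hc : 0 ≤ c := by positivity
  have h2lam : (0:ℝ) < 2 * lam := by linarith
  -- pointwise lower bound for the infimand
  have hbd : ∀ x z : EuclideanSpace ℝ (Fin n),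
      g x - c ≤ g z + ‖x - z‖ ^ 2 / (2 * lam) := by
    intro x z
    have h1 : g x - g z ≤ L * ‖x - z‖ := (abs_le.mp (hLip x z)).2
    have hkey : L * ‖x - z‖ - c ≤ ‖x - z‖ ^ 2 / (2 * lam) := by
      rw [le_div_iff₀ h2lam]
      nlinarith [sq_nonneg (‖x - z‖ - L * lam)]
    linarith
  have hBdd : ∀ x, BddBelow (Set.range fun z : EuclideanSpace ℝ (Fin n) =>
      g z + ‖x - z‖ ^ 2 / (2 * lam)) := fun x =>
    ⟨g x - c, by rintro _ ⟨z, rfl⟩; exact hbd x z⟩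
  have hmye_le : ∀ x, mye g lam x ≤ g x := by
    intro x
    have := ciInf_le (hBdd x) x
    simpa [mye] using this
  have hle_mye : ∀ x, g x - c ≤ mye g lam x := fun x => le_ciInf (hbd x)
  -- mye is Lipschitz, hence continuous
  have hmyeLip : ∀ x y : EuclideanSpace ℝ (Fin n),
      mye g lam x - L * ‖x - y‖ ≤ mye g lam y := by
    intro x y
    apply le_ciInf
    intro z
    have h1 : mye g lam x ≤ g (z + (x - y)) + ‖y - z‖ ^ 2 / (2 * lam) := by
      have h := ciInf_le (hBdd x) (z + (x - y))
      have hn : x - (z + (x - y)) = y - z := by abel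
      rw [mye]
      rw [hn] at h
      exact h
    have h2 : g (z + (x - y)) ≤ g z + L * ‖x - y‖ := by
      have h := (abs_le.mp (hLip (z + (x - y)) z)).2
      have hn : z + (x - y) - z = x - y := by abel
      rw [hn] at h
      linarith
    linarith
  have hcont : Continuous (mye g lam) := by
    have : LipschitzWith (Real.toNNReal (max L 0)) (mye g lam) := by
      apply LipschitzWith.of_dist_le_mul
      intro x y
      rw [Real.dist_eq, dist_eq_norm, Real.coe_toNNReal _ (le_max_right L 0)]
      rw [abs_le]
      constructor
      · have := hmyeLip y x
        have hL : L * ‖y - x‖ ≤ max L 0 * ‖x - y‖ := by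
          rw [norm_sub_rev y x]
          exact mul_le_mul_of_nonneg_right (le_max_left L 0) (norm_nonneg _)
        linarith
      · have := hmyeLip x y
        have hL : L * ‖x - y‖ ≤ max L 0 * ‖x - y‖ :=
          mul_le_mul_of_nonneg_right (le_max_left L 0) (norm_nonneg _)
        linarith
    exact this.continuous
  -- integrability of exp(-g)
  have hintg : Integrable (fun x : EuclideanSpace ℝ (Fin n) => Real.exp (-g x)) := by
    by_contra h
    rw [integral_undef h] at hnorm
    norm_num at hnorm
  -- integrability of exp(-mye)
  have hcont2 : Continuous (fun x => Real.exp (-(mye g lam x))) :=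
    Real.continuous_exp.comp hcont.neg
  have hexp_bound : ∀ x, Real.exp (-(mye g lam x)) ≤ Real.exp c * Real.exp (-g x) := by
    intro x
    rw [← Real.exp_add]
    exact Real.exp_le_exp.mpr (by have := hle_mye x; linarith)
  have hexp_lb : ∀ x, Real.exp (-g x) ≤ Real.exp (-(mye g lam x)) := by
    intro x
    exact Real.exp_le_exp.mpr (by have := hmye_le x; linarith)
  have hintmye : Integrable (fun x : EuclideanSpace ℝ (Fin n) =>
      Real.exp (-(mye g lam x))) := by
    apply (hintg.const_mul (Real.exp c)).mono hcont2.aestronglyMeasurable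
    filter_upwards with x
    rw [Real.norm_eq_abs, Real.norm_eq_abs, abs_of_pos (Real.exp_pos _),
      abs_of_pos (by positivity)]
    exact hexp_bound x
  set Z : ℝ := ∫ z : EuclideanSpace ℝ (Fin n), Real.exp (-(mye g lam z)) with hZ_def
  have hZ1 : 1 ≤ Z := by
    rw [← hnorm]
    exact integral_mono hintg hintmye hexp_lb
  have hZE : Z ≤ Real.exp c := by
    calc Z ≤ ∫ x : EuclideanSpace ℝ (Fin n), Real.exp c * Real.exp (-g x) :=
          integral_mono hintmye (hintg.const_mul _) hexp_bound
      _ = Real.exp c * ∫ x : EuclideanSpace ℝ (Fin n), Real.exp (-g x) :=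
          integral_const_mul _ _
      _ = Real.exp c := by rw [hnorm, mul_one]
  have hZpos : 0 < Z := lt_of_lt_of_le one_pos hZ1
  -- integrability of f * exp(-mye)
  have hintB : Integrable (fun x => f x * Real.exp (-(mye g lam x))) := by
    have h := hflam.mul_const Z
    have : (fun x => f x * (Real.exp (-(mye g lam x)) / Z) * Z) =
        fun x => f x * Real.exp (-(mye g lam x)) := by
      funext x
      field_simp
    rwa [this] at h
  set A : ℝ := ∫ x, f x * Real.exp (-g x) with hA_def
  set B : ℝ := ∫ x, f x * Real.exp (-(mye g lam x)) with hB_def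
  have hA0 : 0 ≤ A := integral_nonneg fun x => mul_nonneg (hfpos x) (Real.exp_pos _).le
  have hAB : A ≤ B :=
    integral_mono hf hintB fun x => mul_le_mul_of_nonneg_left (hexp_lb x) (hfpos x)
  have hBE : B ≤ Real.exp c * A := by
    calc B ≤ ∫ x, Real.exp c * (f x * Real.exp (-g x)) := by
          apply integral_mono hintB (hf.const_mul _)
          intro x
          have := mul_le_mul_of_nonneg_left (hexp_bound x) (hfpos x)
          calc f x * Real.exp (-(mye g lam x))
              ≤ f x * (Real.exp c * Real.exp (-g x)) := this
            _ = Real.exp c * (f x * Real.exp (-g x)) := by ring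
      _ = Real.exp c * A := integral_const_mul _ _
  -- rewrite LHS integral as B / Z
  have hLHS : (∫ x, f x * (Real.exp (-(mye g lam x)) / Z)) = B / Z := by
    simp_rw [div_eq_mul_inv, ← mul_assoc]
    rw [integral_mul_const]
  rw [hLHS]
  -- final algebra
  have hE1 : 1 ≤ Real.exp c := Real.one_le_exp hc
  set E : ℝ := Real.exp c
  have hD0 : 0 ≤ B / Z := div_nonneg (le_trans hA0 hAB) hZpos.le
  have hBZ : B / Z * Z = B := div_mul_cancel₀ _ (ne_of_gt hZpos)
  rw [abs_le]
  constructor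
  · -- -(E-1)*A ≤ B/Z - A
    have h1 : A ≤ B / Z * E := by
      calc A ≤ B := hAB
        _ = B / Z * Z := hBZ.symm
        _ ≤ B / Z * E := mul_le_mul_of_nonneg_left hZE hD0
    nlinarith [mul_nonneg hA0 (sq_nonneg (E - 1)), Real.exp_pos c]
  · -- B/Z - A ≤ (E-1)*A
    have h1 : B / Z ≤ E * A := by
      calc B / Z ≤ B := div_le_self (le_trans hA0 hAB) hZ1
        _ ≤ E * A := hBE
    linarith
end

section
/- Let h : ℝⁿ → ℝ be convex and differentiable, let λ > 0, let x ∈ ℝⁿ, and let p = prox_h^λ(x) be the unique minimizer of u ↦ h(u) + ‖x − u‖²/(2λ). Then ‖∇h(p)‖ ≤ ‖∇h(x)‖. -/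
open Set
open scoped RealInnerProductSpace

/-!
The optimality condition of the proximal problem reads `x - p = λ ∇h(p)`, and the gradient of a
convex function is monotone, so `0 ≤ ⟪∇h(x) - ∇h(p), x - p⟫ = λ ⟪∇h(x) - ∇h(p), ∇h(p)⟫`.
Hence `‖∇h(p)‖² ≤ ⟪∇h(x), ∇h(p)⟫ ≤ ‖∇h(x)‖ ‖∇h(p)‖` by Cauchy–Schwarz.
-/

theorem norm_le_of_sq_norm_le_inner {E : Type*} [NormedAddCommGroup E] [InnerProductSpace ℝ E]
    {a b : E} (h : ‖a‖ ^ 2 ≤ ⟪b, a⟫) : ‖a‖ ≤ ‖b‖ := by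
  nlinarith [real_inner_le_norm b a, norm_nonneg a, norm_nonneg b]

section

variable {E : Type*} [NormedAddCommGroup E] [InnerProductSpace ℝ E] [CompleteSpace E]
  {f : E → ℝ} {s : Set E} {x y : E} {g g' : E}

theorem IsLocalMin.hasGradientAt_eq_zero {a : E} (hmin : IsLocalMin f a)
    (hg : HasGradientAt f g a) : g = 0 := by
  simpa using hmin.hasFDerivAt_eq_zero hg.hasFDerivAt

theorem hasGradientAt_norm_sub_sq (a u : E) :
    HasGradientAt (fun v => ‖a - v‖ ^ 2) ((2 : ℝ) • (u - a)) u := by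
  rw [hasGradientAt_iff_hasFDerivAt]
  refine ((hasFDerivAt_id u).const_sub a).norm_sq.congr_fderiv ?_
  ext v
  simp

theorem HasGradientAt.add {f₁ f₂ : E → ℝ} {g₁ g₂ : E} (h₁ : HasGradientAt f₁ g₁ x)
    (h₂ : HasGradientAt f₂ g₂ x) : HasGradientAt (fun u => f₁ u + f₂ u) (g₁ + g₂) x := by
  rw [hasGradientAt_iff_hasFDerivAt, map_add]
  exact h₁.hasFDerivAt.add h₂.hasFDerivAt

theorem HasGradientAt.div_const (hg : HasGradientAt f g x) (c : ℝ) :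
    HasGradientAt (fun u => f u / c) (c⁻¹ • g) x := by
  rw [hasGradientAt_iff_hasFDerivAt, map_smul]
  simpa [div_eq_mul_inv, mul_comm] using hg.hasFDerivAt.mul_const c⁻¹

theorem ConvexOn.inner_gradient_le_sub (hf : ConvexOn ℝ s f) (hx : x ∈ s) (hy : y ∈ s)
    (hg : HasGradientAt f g x) : ⟪g, y - x⟫ ≤ f y - f x := by
  set L : ℝ →ᵃ[ℝ] E := AffineMap.lineMap x y
  have hline : ConvexOn ℝ (L ⁻¹' s) (f ∘ L) := hf.comp_affineMap L
  have hderiv : HasDerivAt (f ∘ L) ⟪g, y - x⟫ 0 := by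
    simpa using hg.hasFDerivAt.comp_hasDerivAt_of_eq 0 AffineMap.hasDerivAt_lineMap (by simp)
  simpa [slope_def_field, L] using
    hline.le_slope_of_hasDerivAt (x := 0) (y := 1) (by simpa [L] using hx) (by simpa [L] using hy)
      one_pos hderiv

theorem ConvexOn.inner_sub_gradient_nonneg (hf : ConvexOn ℝ s f) (hx : x ∈ s) (hy : y ∈ s)
    (hgx : HasGradientAt f g x) (hgy : HasGradientAt f g' y) : 0 ≤ ⟪g - g', x - y⟫ := by
  have h₁ := hf.inner_gradient_le_sub hx hy hgx
  have h₂ := hf.inner_gradient_le_sub hy hx hgy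
  rw [← neg_sub x y, inner_neg_right] at h₁
  rw [inner_sub_left]
  linarith

theorem IsLocalMin.sub_eq_smul_gradient_of_prox {lam : ℝ} {p : E} (hlam : lam ≠ 0)
    (hmin : IsLocalMin (fun u => f u + ‖x - u‖ ^ 2 / (2 * lam)) p) (hg : HasGradientAt f g p) :
    x - p = lam • g := by
  have hzero : g + lam⁻¹ • (p - x) = 0 := by
    have := hmin.hasGradientAt_eq_zero (hg.add ((hasGradientAt_norm_sub_sq x p).div_const _))
    rwa [smul_smul, mul_inv_rev, mul_assoc, inv_mul_cancel₀ two_ne_zero, mul_one] at this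
  rw [add_eq_zero_iff_eq_neg] at hzero
  rw [hzero, smul_neg, smul_smul, mul_inv_cancel₀ hlam, one_smul, neg_sub]

end

theorem stmt_12 {n : ℕ} (h : EuclideanSpace ℝ (Fin n) → ℝ) (lam : ℝ)
    (hconv : ConvexOn ℝ Set.univ h) (hdiff : Differentiable ℝ h)
    (hlam : 0 < lam) (x p : EuclideanSpace ℝ (Fin n))
    (hp : IsMinOn (fun u => h u + ‖x - u‖ ^ 2 / (2 * lam)) Set.univ p) :
    ‖gradient h p‖ ≤ ‖gradient h x‖ := by
  have hgx : HasGradientAt h (gradient h x) x := (hdiff x).hasGradientAt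
  have hgp : HasGradientAt h (gradient h p) p := (hdiff p).hasGradientAt
  have hopt : x - p = lam • gradient h p :=
    (hp.isLocalMin Filter.univ_mem).sub_eq_smul_gradient_of_prox hlam.ne' hgp
  have hmono := hconv.inner_sub_gradient_nonneg (mem_univ x) (mem_univ p) hgx hgp
  rw [hopt, real_inner_smul_right] at hmono
  have hinner : 0 ≤ ⟪gradient h x - gradient h p, gradient h p⟫ :=
    nonneg_of_mul_nonneg_right hmono hlam
  refine norm_le_of_sq_norm_le_inner ?_
  rw [inner_sub_left, real_inner_self_eq_norm_sq] at hinner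
  linarith
end

section
/- Let λ > 0, α > 0, and let x be a real m × n matrix with singular value decomposition x = Q Σ Vᵀ, where Q and V are orthogonal and Σ = diag(σ₁, …, σ_min(m,n)) with σᵢ ≥ 0. Then the matrix p = Q diag(max(σ₁ − αλ, 0), …, max(σ_min(m,n) − αλ, 0)) Vᵀ is a minimizer over u of α‖u‖_* + ‖x − u‖_F²/(2λ), where ‖u‖_* denotes the nuclear norm (sum of singular values of u) and ‖·‖_F the Frobenius norm; that is, soft-thresholding of the singular values computes the proximal operator of the nuclear norm. -/
open Matrix

/-- The Frobenius norm of a real matrix. -/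
noncomputable def frobeniusNorm {m n : ℕ} (u : Matrix (Fin m) (Fin n) ℝ) : ℝ :=
  Real.sqrt (∑ i, ∑ j, (u i j) ^ 2)

/-- The nuclear norm of a real matrix: the sum of its singular values, i.e. the
sum of the square roots of the eigenvalues of `uᴴ * u`. -/
noncomputable def nuclearNorm {m n : ℕ} (u : Matrix (Fin m) (Fin n) ℝ) : ℝ :=
  ∑ i, Real.sqrt ((Matrix.isHermitian_conjTranspose_mul_self u).eigenvalues i)

open scoped MatrixOrder

/-!
Let `T` be `S` with soft-thresholded diagonal, `p = Q T Vᵀ` and `D = S - T`. Then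
`x - p = Q D Vᵀ` with `D` rectangular diagonal, `|D i j| ≤ α λ` and `D i j * T i j = α λ * T i j`.
The latter gives `⟪x - p, p⟫ = α λ ‖p‖_*`, the former `‖x - p‖_op ≤ α λ`, hence
`⟪x - p, u⟫ ≤ α λ ‖u‖_*` for all `u` by testing against an orthonormal eigenbasis of `uᵀ u`.
Expanding `‖x - u‖² = ‖x - p‖² - 2⟪x - p, u - p⟫ + ‖u - p‖²`
then shows that `p` is a minimizer.
-/

section Orthogonal

variable {ι κ : Type*} [Fintype ι] [Fintype κ]

lemma trace_transpose_mul_eq_sum_sum {R : Type*} [CommSemiring R] (A B : Matrix ι κ R) :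
    trace (Aᵀ * B) = ∑ j, ∑ i, A i j * B i j :=
  rfl

lemma mulVec_dotProduct_mulVec_self {R : Type*} [CommSemiring R] (A : Matrix ι κ R)
    (v : κ → R) : (A *ᵥ v) ⬝ᵥ (A *ᵥ v) = v ⬝ᵥ ((Aᵀ * A) *ᵥ v) := by
  rw [dotProduct_mulVec, ← mulVec_transpose, mulVec_mulVec, dotProduct_comm]

lemma mulVec_dotProduct_mulVec_self_of_transpose_mul_self [DecidableEq κ] {Q : Matrix ι κ ℝ}
    (hQ : Qᵀ * Q = 1) (v : κ → ℝ) : (Q *ᵥ v) ⬝ᵥ (Q *ᵥ v) = v ⬝ᵥ v := by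
  rw [mulVec_dotProduct_mulVec_self, hQ, one_mulVec]

lemma dotProduct_le_sqrt_mul_sqrt (v w : κ → ℝ) : v ⬝ᵥ w ≤ √(v ⬝ᵥ v) * √(w ⬝ᵥ w) := by
  simpa only [dotProduct, sq] using Real.sum_mul_le_sqrt_mul_sqrt Finset.univ v w

lemma transpose_mul_orthogonal_conj [DecidableEq ι] {Q : Matrix ι ι ℝ} (hQ : Qᵀ * Q = 1)
    (V : Matrix κ κ ℝ) (A B : Matrix ι κ ℝ) :
    (Q * A * Vᵀ)ᵀ * (Q * B * Vᵀ) = V * (Aᵀ * B) * Vᵀ := by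
  simp only [transpose_mul, transpose_transpose, Matrix.mul_assoc]
  rw [← Matrix.mul_assoc Qᵀ, hQ, Matrix.one_mul]

lemma trace_transpose_mul_orthogonal_conj [DecidableEq ι] [DecidableEq κ] {Q : Matrix ι ι ℝ}
    {V : Matrix κ κ ℝ} (hQ : Qᵀ * Q = 1) (hV : Vᵀ * V = 1) (A B : Matrix ι κ ℝ) :
    trace ((Q * A * Vᵀ)ᵀ * (Q * B * Vᵀ)) = trace (Aᵀ * B) := by
  rw [transpose_mul_orthogonal_conj hQ, trace_mul_cycle, hV, Matrix.one_mul]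

lemma sqrt_orthogonal_conj [DecidableEq κ] {V : Matrix κ κ ℝ} (hV : Vᵀ * V = 1)
    {M : Matrix κ κ ℝ} (hM : M.PosSemidef) :
    CFC.sqrt (V * M * Vᵀ) = V * CFC.sqrt M * Vᵀ := by
  refine CFC.sqrt_unique ?_ ?_
  · simp only [Matrix.mul_assoc]
    rw [← Matrix.mul_assoc Vᵀ V, hV, Matrix.one_mul, ← Matrix.mul_assoc (CFC.sqrt M),
      CFC.sqrt_mul_sqrt_self M hM.nonneg]
  · rw [nonneg_iff_posSemidef, ← conjTranspose_eq_transpose_of_trivial]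
    exact (nonneg_iff_posSemidef.mp (CFC.sqrt_nonneg M)).mul_mul_conjTranspose_same V

lemma trace_transpose_mul_eq_sum_dotProduct [DecidableEq κ] {W : Matrix κ κ ℝ}
    (hW : W * Wᵀ = 1) (A B : Matrix ι κ ℝ) :
    trace (Aᵀ * B) = ∑ j, (A *ᵥ Wᵀ j) ⬝ᵥ (B *ᵥ Wᵀ j) :=
  calc trace (Aᵀ * B) = trace ((A * W)ᵀ * (B * W)) := by
        rw [transpose_mul, Matrix.mul_assoc, trace_mul_comm Wᵀ, Matrix.mul_assoc,
          Matrix.mul_assoc, hW, Matrix.mul_one]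
    _ = ∑ j, (A *ᵥ Wᵀ j) ⬝ᵥ (B *ᵥ Wᵀ j) := rfl

end Orthogonal

lemma nuclearNorm_eq_trace_sqrt {m n : ℕ} (u : Matrix (Fin m) (Fin n) ℝ) :
    nuclearNorm u = trace (CFC.sqrt (uᵀ * u)) := by
  have hA := isHermitian_conjTranspose_mul_self u
  rw [← conjTranspose_eq_transpose_of_trivial, CFC.sqrt_eq_cfc,
    cfc_nnreal_eq_real _ _ (posSemidef_conjTranspose_mul_self u).nonneg, hA.cfc_eq,
    IsHermitian.cfc, Unitary.conjStarAlgAut_apply, trace_mul_cycle, Unitary.coe_star_mul_self,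
    Matrix.one_mul, trace_diagonal, nuclearNorm]
  simp only [Function.comp_apply, RCLike.ofReal_real_eq_id, id, Real.sqrt]

lemma nuclearNorm_orthogonal_conj {m n : ℕ} {Q : Matrix (Fin m) (Fin m) ℝ}
    {V : Matrix (Fin n) (Fin n) ℝ} (hQ : Qᵀ * Q = 1) (hV : Vᵀ * V = 1)
    (A : Matrix (Fin m) (Fin n) ℝ) : nuclearNorm (Q * A * Vᵀ) = nuclearNorm A := by
  rw [nuclearNorm_eq_trace_sqrt, nuclearNorm_eq_trace_sqrt, transpose_mul_orthogonal_conj hQ,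
    sqrt_orthogonal_conj hV (by simpa using posSemidef_conjTranspose_mul_self A),
    trace_mul_cycle, hV, Matrix.one_mul]

lemma trace_transpose_mul_le_mul_nuclearNorm {m n : ℕ} {G : Matrix (Fin m) (Fin n) ℝ} {c : ℝ}
    (hc : 0 ≤ c) (hG : ∀ v, (G *ᵥ v) ⬝ᵥ (G *ᵥ v) ≤ c ^ 2 * (v ⬝ᵥ v))
    (u : Matrix (Fin m) (Fin n) ℝ) : trace (Gᵀ * u) ≤ c * nuclearNorm u := by
  have hA := isHermitian_conjTranspose_mul_self u
  set W : Matrix (Fin n) (Fin n) ℝ := ↑hA.eigenvectorUnitary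
  have hstar : star W = Wᵀ := conjTranspose_eq_transpose_of_trivial W
  have hW : W * Wᵀ = 1 := hstar ▸ Unitary.coe_mul_star_self _
  have hunit : ∀ j, Wᵀ j ⬝ᵥ Wᵀ j = 1 := fun j =>
    (congr_fun₂ (hstar ▸ Unitary.coe_star_mul_self hA.eigenvectorUnitary) j j).trans
      (one_apply_eq j)
  have heig : ∀ j, (u *ᵥ Wᵀ j) ⬝ᵥ (u *ᵥ Wᵀ j) = hA.eigenvalues j := fun j => by
    rw [mulVec_dotProduct_mulVec_self, ← conjTranspose_eq_transpose_of_trivial u,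
      show Wᵀ j = ⇑(hA.eigenvectorBasis j) from rfl, hA.mulVec_eigenvectorBasis, dotProduct_smul]
    exact (congrArg _ (hunit j)).trans (mul_one _)
  rw [trace_transpose_mul_eq_sum_dotProduct hW, nuclearNorm, Finset.mul_sum]
  gcongr with j
  calc (G *ᵥ Wᵀ j) ⬝ᵥ (u *ᵥ Wᵀ j)
      ≤ √((G *ᵥ Wᵀ j) ⬝ᵥ (G *ᵥ Wᵀ j)) * √((u *ᵥ Wᵀ j) ⬝ᵥ (u *ᵥ Wᵀ j)) :=
        dotProduct_le_sqrt_mul_sqrt _ _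
    _ ≤ √(c ^ 2) * √(hA.eigenvalues j) := by
        rw [heig j]
        gcongr
        simpa [hunit j] using hG (Wᵀ j)
    _ = c * √(hA.eigenvalues j) := by rw [Real.sqrt_sq hc]

def IsRectDiag {m n : ℕ} {R : Type*} [Zero R] (A : Matrix (Fin m) (Fin n) R) : Prop :=
  ∀ (i : Fin m) (j : Fin n), (i : ℕ) ≠ (j : ℕ) → A i j = 0

namespace IsRectDiag

variable {m n : ℕ} {A : Matrix (Fin m) (Fin n) ℝ}

lemma sum_col_map (hA : IsRectDiag A) {M : Type*} [AddCommMonoid M] (g : ℝ → M) (hg : g 0 = 0)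
    (j : Fin n) : ∑ i, g (A i j) = if h : (j : ℕ) < m then g (A ⟨j, h⟩ j) else 0 := by
  split_ifs with h
  · refine Finset.sum_eq_single (⟨j, h⟩ : Fin m) (fun i _ hi => ?_) (by simp)
    rw [hA i j (fun h' => hi (Fin.ext h')), hg]
  · exact Finset.sum_eq_zero fun i _ => by rw [hA i j (by omega), hg]

lemma transpose_mul_self (hA : IsRectDiag A) : Aᵀ * A = diagonal fun j => ∑ i, A i j ^ 2 := by
  ext j k
  rw [mul_apply, diagonal_apply]
  split_ifs with hjk
  · simp [hjk, sq]
  · refine Finset.sum_eq_zero fun i _ => ?_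
    by_cases hij : (i : ℕ) = j
    · rw [hA i k (fun hik => hjk (Fin.ext (hij.symm.trans hik))), mul_zero]
    · rw [transpose_apply, hA i j hij, zero_mul]

lemma sum_sq_col (hA : IsRectDiag A) (j : Fin n) : ∑ i, A i j ^ 2 = (∑ i, A i j) ^ 2 := by
  rw [hA.sum_col_map (· ^ 2) (zero_pow two_ne_zero), hA.sum_col_map (fun t => t) rfl]
  split_ifs <;> simp

lemma nuclearNorm_eq (hA : IsRectDiag A) (hA₀ : ∀ i j, 0 ≤ A i j) :
    nuclearNorm A = ∑ j, ∑ i, A i j := by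
  have hsqrt : CFC.sqrt (Aᵀ * A) = diagonal fun j => ∑ i, A i j := by
    refine CFC.sqrt_unique ?_ ?_
    · rw [diagonal_mul_diagonal, hA.transpose_mul_self]
      congr 1
      ext j
      rw [← sq, ← hA.sum_sq_col]
    · rw [nonneg_iff_posSemidef, posSemidef_diagonal_iff]
      exact fun j => Finset.sum_nonneg fun i _ => hA₀ i j
  rw [nuclearNorm_eq_trace_sqrt, hsqrt, trace_diagonal]

lemma mulVec_dotProduct_mulVec_self_le (hA : IsRectDiag A) {c : ℝ} (hc : ∀ i j, |A i j| ≤ c)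
    (v : Fin n → ℝ) : (A *ᵥ v) ⬝ᵥ (A *ᵥ v) ≤ c ^ 2 * (v ⬝ᵥ v) := by
  have hcol : ∀ j, ∑ i, A i j ^ 2 ≤ c ^ 2 := fun j => by
    rw [hA.sum_col_map (· ^ 2) (zero_pow two_ne_zero)]
    split_ifs
    · exact sq_le_sq' (abs_le.mp (hc _ _)).1 (abs_le.mp (hc _ _)).2
    · positivity
  rw [mulVec_dotProduct_mulVec_self, hA.transpose_mul_self, dotProduct, dotProduct,
    Finset.mul_sum]
  refine Finset.sum_le_sum fun j _ => ?_
  rw [mulVec_diagonal, mul_left_comm]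
  exact mul_le_mul_of_nonneg_right (hcol j) (mul_self_nonneg _)

lemma orthogonal_conj_mulVec_dotProduct_le (hA : IsRectDiag A) {c : ℝ} (hc : ∀ i j, |A i j| ≤ c)
    {Q : Matrix (Fin m) (Fin m) ℝ} {V : Matrix (Fin n) (Fin n) ℝ} (hQ : Qᵀ * Q = 1)
    (hV : V * Vᵀ = 1) (v : Fin n → ℝ) :
    ((Q * A * Vᵀ) *ᵥ v) ⬝ᵥ ((Q * A * Vᵀ) *ᵥ v) ≤ c ^ 2 * (v ⬝ᵥ v) := by
  rw [← mulVec_mulVec, ← mulVec_mulVec, mulVec_dotProduct_mulVec_self_of_transpose_mul_self hQ,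
    ← mulVec_dotProduct_mulVec_self_of_transpose_mul_self (Q := Vᵀ)
      (by rwa [transpose_transpose]) v]
  exact hA.mulVec_dotProduct_mulVec_self_le hc _

end IsRectDiag

lemma frobeniusNorm_sq {m n : ℕ} (u : Matrix (Fin m) (Fin n) ℝ) :
    frobeniusNorm u ^ 2 = trace (uᵀ * u) := by
  rw [frobeniusNorm, Real.sq_sqrt (by positivity), trace_transpose_mul_eq_sum_sum,
    Finset.sum_comm]
  simp only [sq]

lemma frobeniusNorm_sub_sq {m n : ℕ} (a b : Matrix (Fin m) (Fin n) ℝ) :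
    frobeniusNorm (a - b) ^ 2
      = frobeniusNorm a ^ 2 - 2 * trace (aᵀ * b) + frobeniusNorm b ^ 2 := by
  rw [frobeniusNorm_sq, frobeniusNorm_sq, frobeniusNorm_sq, transpose_sub, Matrix.sub_mul,
    Matrix.mul_sub, Matrix.mul_sub, trace_sub, trace_sub, trace_sub, ← trace_transpose (bᵀ * a),
    transpose_mul, transpose_transpose]
  ring

/-- For a norm `N`, the two hypotheses say that `(x - p) / lam ∈ α • ∂N p`. -/
lemma isMinOn_prox_of_trace {m n : ℕ} {lam α : ℝ} (hlam : 0 < lam)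
    (N : Matrix (Fin m) (Fin n) ℝ → ℝ) {x p : Matrix (Fin m) (Fin n) ℝ}
    (hp : trace ((x - p)ᵀ * p) = α * lam * N p)
    (hle : ∀ u, trace ((x - p)ᵀ * u) ≤ α * lam * N u) :
    IsMinOn (fun u => α * N u + frobeniusNorm (x - u) ^ 2 / (2 * lam)) Set.univ p := by
  refine isMinOn_univ_iff.mpr fun u => ?_
  have hsplit := frobeniusNorm_sub_sq (x - p) (u - p)
  rw [sub_sub_sub_cancel_right, Matrix.mul_sub, trace_sub, hp] at hsplit
  have key : frobeniusNorm (x - p) ^ 2 + 2 * lam * (α * N p - α * N u)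
      ≤ frobeniusNorm (x - u) ^ 2 := by
    linarith [hle u, sq_nonneg (frobeniusNorm (u - p))]
  rw [add_div' _ _ _ (by positivity), add_div' _ _ _ (by positivity),
    div_le_div_iff_of_pos_right (by positivity)]
  linarith

lemma sub_max_sub_zero_mul_max (s c : ℝ) :
    (s - max (s - c) 0) * max (s - c) 0 = c * max (s - c) 0 := by
  rcases le_total (s - c) 0 with h | h <;> simp [h]

lemma abs_sub_max_sub_zero_le {s c : ℝ} (hs : 0 ≤ s) (hc : 0 ≤ c) : |s - max (s - c) 0| ≤ c := by
  rw [abs_le]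
  rcases le_total (s - c) 0 with h | h <;> simp only [h, max_eq_left, max_eq_right] <;>
    constructor <;> linarith

theorem stmt_19_general {m n : ℕ} (lam α : ℝ) (hlam : 0 < lam) (hα : 0 < α)
    (x : Matrix (Fin m) (Fin n) ℝ)
    (Q : Matrix (Fin m) (Fin m) ℝ) (V : Matrix (Fin n) (Fin n) ℝ)
    (S : Matrix (Fin m) (Fin n) ℝ)
    (hQ' : Qᵀ * Q = 1)
    (hV : V * Vᵀ = 1) (hV' : Vᵀ * V = 1)
    (hSdiag : ∀ (i : Fin m) (j : Fin n), (i : ℕ) ≠ (j : ℕ) → S i j = 0)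
    (hSnn : ∀ (i : Fin m) (j : Fin n), 0 ≤ S i j)
    (hx : x = Q * S * Vᵀ) :
    IsMinOn (fun u : Matrix (Fin m) (Fin n) ℝ =>
        α * nuclearNorm u + (frobeniusNorm (x - u)) ^ 2 / (2 * lam))
      Set.univ
      (Q * Matrix.of (fun (i : Fin m) (j : Fin n) =>
        if (i : ℕ) = (j : ℕ) then max (S i j - α * lam) 0 else 0) * Vᵀ) := by
  set T : Matrix (Fin m) (Fin n) ℝ := of fun i j =>
    if (i : ℕ) = (j : ℕ) then max (S i j - α * lam) 0 else 0
  have hc : 0 ≤ α * lam := by positivity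
  have hT : IsRectDiag T := fun i j h => if_neg h
  have hT₀ : ∀ i j, 0 ≤ T i j := fun i j => by
    simp only [T, of_apply]
    split_ifs <;> simp
  have hD : IsRectDiag (S - T) := fun i j h => by simp [T, h, hSdiag i j h]
  have hDT : ∀ i j, (S - T) i j * T i j = α * lam * T i j ∧ |(S - T) i j| ≤ α * lam :=
    fun i j => by
      by_cases h : (i : ℕ) = j
      · simp only [T, Matrix.sub_apply, of_apply, if_pos h]
        exact ⟨sub_max_sub_zero_mul_max _ _, abs_sub_max_sub_zero_le (hSnn i j) hc⟩
      · simp [T, h, hSdiag i j h, hc]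
  have hxp : x - Q * T * Vᵀ = Q * (S - T) * Vᵀ := by rw [hx, Matrix.mul_sub, Matrix.sub_mul]
  refine isMinOn_prox_of_trace hlam nuclearNorm ?_ fun u => ?_
  · rw [hxp, trace_transpose_mul_orthogonal_conj hQ' hV', nuclearNorm_orthogonal_conj hQ' hV',
      hT.nuclearNorm_eq hT₀, trace_transpose_mul_eq_sum_sum, Finset.mul_sum]
    simp only [Finset.mul_sum, (hDT _ _).1]
  · rw [hxp]
    exact trace_transpose_mul_le_mul_nuclearNorm hc
      (hD.orthogonal_conj_mulVec_dotProduct_le (fun i j => (hDT i j).2) hQ' hV) u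

theorem stmt_19 {m n : ℕ} (lam α : ℝ) (hlam : 0 < lam) (hα : 0 < α)
    (x : Matrix (Fin m) (Fin n) ℝ)
    (Q : Matrix (Fin m) (Fin m) ℝ) (V : Matrix (Fin n) (Fin n) ℝ)
    (S : Matrix (Fin m) (Fin n) ℝ)
    (hQ : Q * Qᵀ = 1) (hQ' : Qᵀ * Q = 1)
    (hV : V * Vᵀ = 1) (hV' : Vᵀ * V = 1)
    (hSdiag : ∀ (i : Fin m) (j : Fin n), (i : ℕ) ≠ (j : ℕ) → S i j = 0)
    (hSnn : ∀ (i : Fin m) (j : Fin n), 0 ≤ S i j)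
    (hx : x = Q * S * Vᵀ) :
    IsMinOn (fun u : Matrix (Fin m) (Fin n) ℝ =>
        α * nuclearNorm u + (frobeniusNorm (x - u)) ^ 2 / (2 * lam))
      Set.univ
      (Q * Matrix.of (fun (i : Fin m) (j : Fin n) =>
        if (i : ℕ) = (j : ℕ) then max (S i j - α * lam) 0 else 0) * Vᵀ) :=
  stmt_19_general lam α hlam hα x Q V S hQ' hV hV' hSdiag hSnn hx
end
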